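/- arXiv:1401.3781 — 3 statements merged into one kernel-verified Lean document; each statement's English description precedes it below -/
import Mathlib

section
/- Let 0 < v < 1, μ ∈ ℝ and s ∈ ℝ. Then the equation (1 − Φ(x)) / (Φ_{μ,v}(s) − Φ_{μ,v}(x)) = N(x) / N_{μ,v}(x) has a unique real solution β_{μ,v,s}, and this solution satisfies β_{μ,v,s} < min{s, μ/(1−v)}. -/
open MeasureTheory

/-- Density of the normal distribution with mean `μ` and variance `v`. -/
noncomputable def nPDF (μ v x : ℝ) : ℝ :=
  (Real.sqrt (2 * Real.pi * v))⁻¹ * Real.exp (-(x - μ) ^ 2 / (2 * v))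

/-- Cumulative distribution function of the normal distribution with mean `μ`
and variance `v`. -/
noncomputable def nCDF (μ v x : ℝ) : ℝ := ∫ t in Set.Iic x, nPDF μ v t

/-!
Write `r = N / N_{μ,v}`. Where `Φ_{μ,v}(s) ≠ Φ_{μ,v}(x)` the equation says `F(x) = 0` for
`F(x) = 1 - Φ(x) - r(x) (Φ_{μ,v}(s) - Φ_{μ,v}(x))`, and where `Φ_{μ,v}(s) = Φ_{μ,v}(x)` neither
holds (the left side is then `0` by the convention `a / 0 = 0`).
Since `r N_{μ,v} = N`, `F'(x) = r(x) (μ - (1 - v) x) / v · (Φ_{μ,v}(s) - Φ_{μ,v}(x))`, which is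
positive below `m = min {s, μ / (1 - v)}`. As `v < 1`, `r → ∞` at `-∞`, hence `F → -∞` there. On
`[m, ∞)` we have `F > 0`: beyond `s` trivially, and beyond `μ / (1 - v)` because `r` increases
there, so that comparing the tails `∫_x^∞ N_{μ,v} = ∫_x^∞ N / r` and `∫_x^∞ N` gives
`r(x) (1 - Φ_{μ,v}(x)) ≤ 1 - Φ(x)`. So `F` has exactly one zero, and it lies below `m`.
-/

open Filter Set Real ProbabilityTheory

variable {μ v s x : ℝ}

lemma nPDF_eq_gaussianPDFReal (hv : 0 ≤ v) (μ : ℝ) : nPDF μ v = gaussianPDFReal μ v.toNNReal := by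
  ext x
  simp [nPDF, gaussianPDFReal, Real.coe_toNNReal _ hv]

lemma nPDF_pos (hv : 0 < v) (μ x : ℝ) : 0 < nPDF μ v x := by
  rw [nPDF_eq_gaussianPDFReal hv.le]
  exact gaussianPDFReal_pos _ _ _ (by simpa using hv)

lemma integrable_nPDF (hv : 0 < v) (μ : ℝ) : Integrable (nPDF μ v) := by
  rw [nPDF_eq_gaussianPDFReal hv.le]
  exact integrable_gaussianPDFReal _ _

lemma integral_nPDF (hv : 0 < v) (μ : ℝ) : ∫ x, nPDF μ v x = 1 := by
  rw [nPDF_eq_gaussianPDFReal hv.le]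
  exact integral_gaussianPDFReal_eq_one _ (by simpa using hv)

lemma continuous_nPDF (μ v : ℝ) : Continuous (nPDF μ v) := by
  unfold nPDF
  fun_prop

lemma hasDerivAt_nCDF (hv : 0 < v) (μ x : ℝ) : HasDerivAt (nCDF μ v) (nPDF μ v x) x := by
  have hsplit : nCDF μ v = fun y ↦ nCDF μ v 0 + ∫ t in (0 : ℝ)..y, nPDF μ v t := by
    ext y
    rw [nCDF, nCDF, ← intervalIntegral.integral_Iic_sub_Iic (integrable_nPDF hv μ).integrableOn
      (integrable_nPDF hv μ).integrableOn, add_sub_cancel]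
  rw [hsplit]
  exact (intervalIntegral.integral_hasDerivAt_right (integrable_nPDF hv μ).intervalIntegrable
    ((continuous_nPDF μ v).stronglyMeasurableAtFilter _ _)
    (continuous_nPDF μ v).continuousAt).const_add _

lemma strictMono_nCDF (hv : 0 < v) (μ : ℝ) : StrictMono (nCDF μ v) :=
  strictMono_of_deriv_pos fun x ↦ (hasDerivAt_nCDF hv μ x).deriv ▸ nPDF_pos hv μ x

lemma nCDF_nonneg (hv : 0 < v) (μ x : ℝ) : 0 ≤ nCDF μ v x :=
  setIntegral_nonneg measurableSet_Iic fun t _ ↦ (nPDF_pos hv μ t).le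

lemma nCDF_lt_one (hv : 0 < v) (μ x : ℝ) : nCDF μ v x < 1 :=
  calc nCDF μ v x < nCDF μ v (x + 1) := strictMono_nCDF hv μ (lt_add_one x)
    _ ≤ ∫ t, nPDF μ v t :=
      setIntegral_le_integral (integrable_nPDF hv μ) (ae_of_all _ fun t ↦ (nPDF_pos hv μ t).le)
    _ = 1 := integral_nPDF hv μ

lemma one_sub_nCDF (hv : 0 < v) (μ x : ℝ) : 1 - nCDF μ v x = ∫ t in Ioi x, nPDF μ v t := by
  rw [← integral_nPDF hv μ, ← integral_add_compl measurableSet_Iic (integrable_nPDF hv μ),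
    compl_Iic, nCDF, add_sub_cancel_left]

noncomputable def densityRatio (μ v x : ℝ) : ℝ := nPDF 0 1 x / nPDF μ v x

lemma densityRatio_pos (hv : 0 < v) (μ x : ℝ) : 0 < densityRatio μ v x :=
  div_pos (nPDF_pos one_pos 0 x) (nPDF_pos hv μ x)

lemma densityRatio_eq (hv : 0 < v) (μ x : ℝ) :
    densityRatio μ v x = √v * exp ((x - μ) ^ 2 / (2 * v) - x ^ 2 / 2) := by
  have hexp : exp ((x - μ) ^ 2 / (2 * v) - x ^ 2 / 2) * exp (-(x - μ) ^ 2 / (2 * v)) =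
      exp (-(x - 0) ^ 2 / (2 * 1)) := by
    rw [← exp_add]
    ring_nf
  rw [densityRatio, div_eq_iff (nPDF_pos hv μ x).ne', nPDF, nPDF, mul_one, sqrt_mul' _ hv.le,
    ← hexp]
  field_simp

lemma hasDerivAt_densityRatio (hv : 0 < v) (μ x : ℝ) :
    HasDerivAt (densityRatio μ v) (densityRatio μ v x * (((1 - v) * x - μ) / v)) x := by
  have hq : HasDerivAt (fun y ↦ (y - μ) ^ 2 / (2 * v) - y ^ 2 / 2) (((1 - v) * x - μ) / v) x := by
    refine ((((hasDerivAt_id' x).sub_const μ).pow 2).div_const (2 * v) |>.sub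
      (((hasDerivAt_id' x).pow 2).div_const 2)).congr_deriv ?_
    field_simp
    ring
  have h := hq.exp.const_mul √v
  rwa [← mul_assoc, ← densityRatio_eq hv, ← funext (densityRatio_eq hv μ)] at h

lemma monotoneOn_densityRatio (hv0 : 0 < v) (hv1 : v < 1) (μ : ℝ) :
    MonotoneOn (densityRatio μ v) (Ici (μ / (1 - v))) := by
  refine monotoneOn_of_hasDerivWithinAt_nonneg (convex_Ici _)
    (fun x _ ↦ (hasDerivAt_densityRatio hv0 μ x).continuousAt.continuousWithinAt)
    (fun x _ ↦ (hasDerivAt_densityRatio hv0 μ x).hasDerivWithinAt) fun x hx ↦ ?_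
  rw [interior_Ici, mem_Ioi, div_lt_iff₀ (sub_pos.2 hv1)] at hx
  exact mul_nonneg (densityRatio_pos hv0 μ x).le (div_nonneg (by linarith) hv0.le)

lemma densityRatio_mul_one_sub_nCDF_le (hv0 : 0 < v) (hv1 : v < 1) (hx : μ / (1 - v) ≤ x) :
    densityRatio μ v x * (1 - nCDF μ v x) ≤ 1 - nCDF 0 1 x := by
  rw [one_sub_nCDF hv0, one_sub_nCDF one_pos, ← integral_const_mul]
  refine setIntegral_mono_on ((integrable_nPDF hv0 μ).const_mul _).integrableOn
    (integrable_nPDF one_pos 0).integrableOn measurableSet_Ioi fun t ht ↦ ?_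
  calc densityRatio μ v x * nPDF μ v t ≤ densityRatio μ v t * nPDF μ v t := by
        gcongr
        · exact (nPDF_pos hv0 μ t).le
        · exact monotoneOn_densityRatio hv0 hv1 μ hx (hx.trans ht.le) ht.le
    _ = nPDF 0 1 t := div_mul_cancel₀ _ (nPDF_pos hv0 μ t).ne'

noncomputable def equationGap (μ v s x : ℝ) : ℝ :=
  (1 - nCDF 0 1 x) - densityRatio μ v x * (nCDF μ v s - nCDF μ v x)

lemma equation_iff_equationGap_eq_zero (hv : 0 < v) (μ s x : ℝ) :
    (1 - nCDF 0 1 x) / (nCDF μ v s - nCDF μ v x) = nPDF 0 1 x / nPDF μ v x ↔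
      equationGap μ v s x = 0 := by
  have hP := nPDF_pos hv μ x
  by_cases hD : nCDF μ v s - nCDF μ v x = 0
  · rw [equationGap, hD, div_zero, mul_zero, sub_zero]
    exact iff_of_false (div_pos (nPDF_pos one_pos 0 x) hP).ne
      (sub_pos.2 (nCDF_lt_one one_pos 0 x)).ne'
  · rw [div_eq_div_iff hD hP.ne', equationGap, sub_eq_zero, densityRatio, div_mul_eq_mul_div,
      eq_div_iff hP.ne']

lemma hasDerivAt_equationGap (hv : 0 < v) (μ s x : ℝ) :
    HasDerivAt (equationGap μ v s)
      (densityRatio μ v x * ((μ - (1 - v) * x) / v) * (nCDF μ v s - nCDF μ v x)) x := by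
  have hrP : densityRatio μ v x * nPDF μ v x = nPDF 0 1 x :=
    div_mul_cancel₀ _ (nPDF_pos hv μ x).ne'
  refine (((hasDerivAt_nCDF one_pos 0 x).const_sub 1).sub ((hasDerivAt_densityRatio hv μ x).mul
    ((hasDerivAt_nCDF hv μ x).const_sub (nCDF μ v s)))).congr_deriv ?_
  linear_combination hrP

lemma continuous_equationGap (hv : 0 < v) (μ s : ℝ) : Continuous (equationGap μ v s) :=
  continuous_iff_continuousAt.2 fun x ↦ (hasDerivAt_equationGap hv μ s x).continuousAt

lemma strictMonoOn_equationGap (hv0 : 0 < v) (hv1 : v < 1) (μ s : ℝ) :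
    StrictMonoOn (equationGap μ v s) (Iic (min s (μ / (1 - v)))) := by
  refine strictMonoOn_of_hasDerivWithinAt_pos (convex_Iic _)
    (continuous_equationGap hv0 μ s).continuousOn
    (fun x _ ↦ (hasDerivAt_equationGap hv0 μ s x).hasDerivWithinAt) fun x hx ↦ ?_
  rw [interior_Iic, mem_Iio, lt_min_iff, lt_div_iff₀ (sub_pos.2 hv1)] at hx
  have hμ : 0 < (μ - (1 - v) * x) / v := div_pos (by linarith [hx.2]) hv0
  exact mul_pos (mul_pos (densityRatio_pos hv0 μ x) hμ) (sub_pos.2 (strictMono_nCDF hv0 μ hx.1))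

lemma equationGap_pos (hv0 : 0 < v) (hv1 : v < 1) (hx : min s (μ / (1 - v)) ≤ x) :
    0 < equationGap μ v s x := by
  have hr := densityRatio_pos hv0 μ x
  rcases min_le_iff.1 hx with hs | hμ
  · have hD : nCDF μ v s - nCDF μ v x ≤ 0 := sub_nonpos.2 ((strictMono_nCDF hv0 μ).monotone hs)
    have hrD := mul_nonpos_of_nonneg_of_nonpos hr.le hD
    have hΦ := nCDF_lt_one one_pos 0 x
    rw [equationGap]
    linarith
  · have hmills := densityRatio_mul_one_sub_nCDF_le hv0 hv1 hμ
    have hs := mul_pos hr (sub_pos.2 (nCDF_lt_one hv0 μ s))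
    rw [equationGap]
    linarith

lemma tendsto_densityRatio_atBot (hv0 : 0 < v) (hv1 : v < 1) (μ : ℝ) :
    Tendsto (densityRatio μ v) atBot atTop := by
  have hlin : Tendsto (fun x ↦ (1 - v) / (2 * v) * x + -(μ / v)) atBot atBot :=
    tendsto_atBot_add_const_right _ _
      (tendsto_id.const_mul_atBot (div_pos (sub_pos.2 hv1) (by positivity)))
  have hq : Tendsto (fun x ↦ (x - μ) ^ 2 / (2 * v) - x ^ 2 / 2) atBot atTop := by
    refine (tendsto_atTop_add_const_right _ (μ ^ 2 / (2 * v))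
      (tendsto_id.atBot_mul_atBot₀ hlin)).congr fun x ↦ ?_
    simp only [id]
    field_simp
    ring
  rw [funext (densityRatio_eq hv0 μ)]
  exact (tendsto_exp_atTop.comp hq).const_mul_atTop (sqrt_pos.2 hv0)

lemma tendsto_equationGap_atBot (hv0 : 0 < v) (hv1 : v < 1) (μ s : ℝ) :
    Tendsto (equationGap μ v s) atBot atBot := by
  set ε := nCDF μ v s - nCDF μ v (s - 1)
  have hε : 0 < ε := sub_pos.2 (strictMono_nCDF hv0 μ (sub_one_lt s))
  have hbound : Tendsto (fun x ↦ 1 + -(ε * densityRatio μ v x)) atBot atBot :=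
    tendsto_atBot_add_const_left _ 1 (tendsto_neg_atTop_atBot.comp
      ((tendsto_densityRatio_atBot hv0 hv1 μ).const_mul_atTop hε))
  refine tendsto_atBot_mono' _ ?_ hbound
  filter_upwards [eventually_le_atBot (s - 1)] with x hx
  have hD : ε ≤ nCDF μ v s - nCDF μ v x :=
    sub_le_sub_left ((strictMono_nCDF hv0 μ).monotone hx) _
  have hrD := mul_le_mul_of_nonneg_left hD (densityRatio_pos hv0 μ x).le
  have hΦ := nCDF_nonneg one_pos 0 x
  rw [equationGap]
  linarith

/-- Lemma 1: for `0 < v < 1`, the equation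
`(1 − Φ(x)) / (Φ_{μ,v}(s) − Φ_{μ,v}(x)) = N(x) / N_{μ,v}(x)` has a unique real
solution `β`, and it satisfies `β < min {s, μ/(1−v)}`. -/
theorem unique_solution_lt_one (v μ s : ℝ) (hv0 : 0 < v) (hv1 : v < 1) :
    ∃ β : ℝ,
      (∀ x : ℝ,
        (1 - nCDF 0 1 x) / (nCDF μ v s - nCDF μ v x) = nPDF 0 1 x / nPDF μ v x ↔ x = β) ∧
      β < min s (μ / (1 - v)) := by
  set x₁ := min s (μ / (1 - v))
  have lt_of_zero (x : ℝ) (hx : equationGap μ v s x = 0) : x < x₁ :=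
    not_le.1 fun h ↦ (equationGap_pos hv0 hv1 h).ne' hx
  obtain ⟨x₀, hx₀, hx₀x₁⟩ := (((tendsto_equationGap_atBot hv0 hv1 μ s).eventually
    (eventually_lt_atBot 0)).and (eventually_lt_atBot x₁)).exists
  obtain ⟨β, -, hβ⟩ := intermediate_value_Icc hx₀x₁.le
    (continuous_equationGap hv0 μ s).continuousOn
    ⟨hx₀.le, (equationGap_pos hv0 hv1 le_rfl).le⟩
  refine ⟨β, fun x ↦ ?_, lt_of_zero β hβ⟩
  rw [equation_iff_equationGap_eq_zero hv0]
  exact ⟨fun hx ↦ (strictMonoOn_equationGap hv0 hv1 μ s).injOn (lt_of_zero x hx).le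
    (lt_of_zero β hβ).le (hx.trans hβ.symm), fun hx ↦ hx ▸ hβ⟩
end

section
/- Let P and Q be probability distributions on finite sets and let N be a natural number. Then F^𝓜(P → Q | N) = F^𝓜(𝒞_{2^N}(P) → Q), i.e., the maximal fidelity of majorization conversion from P to Q via a storage of N bits equals the maximal fidelity of (unrestricted) majorization conversion from the distribution 𝒞_{2^N}(P) to Q. -/
open Filter MeasureTheory Topology

section Defs

variable {α β : Type*} [Fintype α] [Fintype β]

/-- `P` is a probability distribution on the finite type `α`. -/
def IsProbDist (P : α → ℝ) : Prop := (∀ x, 0 ≤ P x) ∧ ∑ x, P x = 1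

/-- Fidelity (Bhattacharyya coefficient) of two distributions on a finite set. -/
noncomputable def fid (P Q : α → ℝ) : ℝ := ∑ x, Real.sqrt (P x * Q x)

/-- Sum of the `l` largest values of `P` (for nonnegative `P`). -/
noncomputable def topSum (P : α → ℝ) (l : ℕ) : ℝ :=
  sSup {r : ℝ | ∃ S : Finset α, S.card ≤ l ∧ r = ∑ x ∈ S, P x}

/-- `P ≺ Q`: `P` is majorized by `Q` (the underlying finite sets may differ). -/
def MajorizedBy (P : α → ℝ) (Q : β → ℝ) : Prop := ∀ l : ℕ, topSum P l ≤ topSum Q l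

open Classical in
/-- Pushforward `W(P)` of the distribution `P` under a deterministic map `W`. -/
noncomputable def push (W : α → β) (P : α → ℝ) : β → ℝ :=
  fun y => ∑ x, if W x = y then P x else 0

/-- Maximal fidelity `F^𝓓(P → Q)` among deterministic conversions. -/
noncomputable def FD (P : α → ℝ) (Q : β → ℝ) : ℝ :=
  sSup {r : ℝ | ∃ W : α → β, r = fid (push W P) Q}

/-- Maximal fidelity `F^𝓓(P → Q | ·)` among deterministic conversions routed
through a storage set with `M` elements (a storage of `N` bits has `M = 2^N`). -/
noncomputable def FDstore (P : α → ℝ) (Q : β → ℝ) (M : ℕ) : ℝ :=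
  sSup {r : ℝ | ∃ W : α → Fin M, ∃ W' : Fin M → β, r = fid (push W' (push W P)) Q}

/-- Maximal fidelity `F^𝓜(P → Q)` among majorization conversions. -/
noncomputable def FM (P : α → ℝ) (Q : β → ℝ) : ℝ :=
  sSup {r : ℝ | ∃ P'' : β → ℝ, IsProbDist P'' ∧ MajorizedBy P P'' ∧ r = fid P'' Q}

/-- Maximal fidelity `F^𝓜(P → Q | ·)` among majorization conversions routed
through a storage set with `M` elements (a storage of `N` bits has `M = 2^N`). -/
noncomputable def FMstore (P : α → ℝ) (Q : β → ℝ) (M : ℕ) : ℝ :=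
  sSup {r : ℝ | ∃ P' : Fin M → ℝ, ∃ P'' : β → ℝ,
    IsProbDist P' ∧ IsProbDist P'' ∧ MajorizedBy P P' ∧ MajorizedBy P' P'' ∧
    r = fid P'' Q}

/-- The `n`-fold i.i.d. distribution `P^n`. -/
noncomputable def iid (P : α → ℝ) (n : ℕ) : (Fin n → α) → ℝ := fun f => ∏ i, P (f i)

/-- The uniform distribution `U_N` on an `N`-element set. -/
noncomputable def unif (N : ℕ) : Fin N → ℝ := fun _ => (N : ℝ)⁻¹

/-- Shannon entropy `H(P)` (base-2 logarithm). -/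
noncomputable def ent (P : α → ℝ) : ℝ := -∑ x, P x * Real.logb 2 (P x)

/-- The varentropy `V(P) = Σ_x P(x)(−log₂P(x) − H(P))²`. -/
noncomputable def varInfo (P : α → ℝ) : ℝ :=
  ∑ x, P x * (-Real.logb 2 (P x) - ent P) ^ 2

/-- `L^𝓓(P, Q | ν)`: maximal number of copies of `Q` obtainable from `P` by a
deterministic conversion with fidelity at least `ν`. -/
noncomputable def LD (P : α → ℝ) (Q : β → ℝ) (ν : ℝ) : ℕ :=
  sSup {L : ℕ | ν ≤ FD P (iid Q L)}

/-- `L^𝓜(P, Q | ν)`. -/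
noncomputable def LM (P : α → ℝ) (Q : β → ℝ) (ν : ℝ) : ℕ :=
  sSup {L : ℕ | ν ≤ FM P (iid Q L)}

/-- `L^𝓓(P, Q | ν, ·)` via a storage set with `M` elements. -/
noncomputable def LDstore (P : α → ℝ) (Q : β → ℝ) (ν : ℝ) (M : ℕ) : ℕ :=
  sSup {L : ℕ | ν ≤ FDstore P (iid Q L) M}

/-- `L^𝓜(P, Q | ν, ·)` via a storage set with `M` elements. -/
noncomputable def LMstore (P : α → ℝ) (Q : β → ℝ) (ν : ℝ) (M : ℕ) : ℕ :=
  sSup {L : ℕ | ν ≤ FMstore P (iid Q L) M}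

/-- The `j`-th largest value `P↓(j)` of `P` (1-indexed; `0` for `j > |α|`). -/
noncomputable def sortedVal (P : α → ℝ) (j : ℕ) : ℝ := topSum P j - topSum P (j - 1)

/-- The index `J_{P,M}`. -/
noncomputable def JPM (P : α → ℝ) (M : ℕ) : ℕ :=
  sSup ({0} ∪ {j : ℕ | 1 ≤ j ∧ j ≤ M - 1 ∧
    ((∑ x, P x) - topSum P j) / ((M : ℝ) - (j : ℝ)) < sortedVal P j})

open Classical in
/-- The distribution `𝒞_M(P)` on an `M`-element set. -/
noncomputable def CM (P : α → ℝ) (M : ℕ) : Fin M → ℝ := fun j =>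
  if (j : ℕ) + 1 ≤ JPM P M then sortedVal P ((j : ℕ) + 1)
  else ((∑ x, P x) - topSum P (JPM P M)) / ((M : ℝ) - (JPM P M : ℝ))

end Defs

/-!
Write `T_P(l)` for the sum of the `l` largest values of `P`, so that `P ≺ P'` means
`T_P ≤ T_{P'}`; an exchange argument shows that `T_P` is concave. The profile of `𝒞_M(P)`
agrees with `T_P` up to `J = J_{P,M}` and then grows linearly, reaching the total mass at `M`.
It dominates `T_P` because, by the maximality of `J`, the increments of `T_P` beyond `J` are at
most the level of `𝒞_M(P)` there; and it is dominated by `T_{P'}` for every `P'` on `M` points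
with `P ≺ P'`, since `T_{P'}` is concave, at least `T_P(J)` at `J` and equal to the total mass at
`M`. So `𝒞_M(P)` is the least distribution on `M` points majorizing `P`, and the two
optimization problems range over the same final distributions.
-/

open Finset

section AntitoneIncrements

variable {f : ℕ → ℝ}

lemma sub_le_mul_increment (hf : Antitone fun k => f (k + 1) - f k) {m b : ℕ} (h : m ≤ b) :
    f b - f m ≤ ((b : ℝ) - m) * (f (m + 1) - f m) := by
  rw [← sum_Ico_sub f h, ← Nat.cast_sub h, ← Nat.card_Ico, ← nsmul_eq_mul]
  exact sum_le_card_nsmul _ _ _ fun k hk => hf (mem_Ico.1 hk).1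

lemma mul_increment_le_sub (hf : Antitone fun k => f (k + 1) - f k) {a l : ℕ} (h : a ≤ l) :
    ((l : ℝ) - a) * (f (l + 1) - f l) ≤ f l - f a := by
  rw [← sum_Ico_sub f h, ← Nat.cast_sub h, ← Nat.card_Ico, ← nsmul_eq_mul]
  exact card_nsmul_le_sum _ _ _ fun k hk => hf (mem_Ico.1 hk).2.le

lemma interpolate_le_of_antitone_increment (hf : Antitone fun k => f (k + 1) - f k)
    {a l b : ℕ} (hal : a ≤ l) (hlb : l ≤ b) :
    ((b : ℝ) - l) * f a + ((l : ℝ) - a) * f b ≤ ((b : ℝ) - a) * f l := by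
  have hbl : (0 : ℝ) ≤ (b : ℝ) - l := sub_nonneg.2 (by exact_mod_cast hlb)
  have hla : (0 : ℝ) ≤ (l : ℝ) - a := sub_nonneg.2 (by exact_mod_cast hal)
  have h₁ := mul_le_mul_of_nonneg_left (mul_increment_le_sub hf hal) hbl
  have h₂ := mul_le_mul_of_nonneg_left (sub_le_mul_increment hf hlb) hla
  linarith

end AntitoneIncrements

lemma sortedVal_succ {α : Type*} (P : α → ℝ) (k : ℕ) :
    sortedVal P (k + 1) = topSum P (k + 1) - topSum P k := by
  simp [sortedVal]

section TopSum

variable {α : Type*} [Fintype α] (P : α → ℝ)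

lemma finite_topSum_set (l : ℕ) :
    {r : ℝ | ∃ S : Finset α, #S ≤ l ∧ r = ∑ x ∈ S, P x}.Finite :=
  (Set.finite_range fun S : Finset α => ∑ x ∈ S, P x).subset <| by
    rintro _ ⟨S, -, rfl⟩
    exact ⟨S, rfl⟩

lemma exists_topSum_eq (l : ℕ) : ∃ S : Finset α, #S ≤ l ∧ topSum P l = ∑ x ∈ S, P x :=
  Set.Nonempty.csSup_mem (s := {r : ℝ | ∃ S : Finset α, #S ≤ l ∧ r = ∑ x ∈ S, P x})
    ⟨0, ∅, by simp⟩ (finite_topSum_set P l)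

lemma sum_le_topSum {l : ℕ} (S : Finset α) (h : #S ≤ l) : ∑ x ∈ S, P x ≤ topSum P l :=
  le_csSup (finite_topSum_set P l).bddAbove ⟨S, h, rfl⟩

@[simp]
lemma topSum_zero : topSum P 0 = 0 := by
  obtain ⟨S, hS, hP⟩ := exists_topSum_eq P 0
  rw [hP, card_eq_zero.1 (Nat.le_zero.1 hS), sum_empty]

lemma topSum_mono : Monotone (topSum P) := fun l l' h => by
  obtain ⟨S, hS, hP⟩ := exists_topSum_eq P l
  exact hP ▸ sum_le_topSum P S (hS.trans h)

lemma topSum_le_sum (hP : 0 ≤ P) (l : ℕ) : topSum P l ≤ ∑ x, P x := by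
  obtain ⟨S, -, hS⟩ := exists_topSum_eq P l
  exact hS ▸ sum_le_sum_of_subset_of_nonneg (subset_univ S) fun x _ _ => hP x

lemma topSum_eq_sum (hP : 0 ≤ P) {l : ℕ} (h : Fintype.card α ≤ l) :
    topSum P l = ∑ x, P x :=
  (topSum_le_sum P hP l).antisymm (sum_le_topSum P univ (by simpa using h))

/-- Exchanging an element of an optimal `(l + 2)`-set for one missing from an optimal
`l`-set produces two `(l + 1)`-sets. -/
lemma topSum_add_two_add_topSum_le (l : ℕ) :
    topSum P (l + 2) + topSum P l ≤ 2 * topSum P (l + 1) := by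
  classical
  obtain ⟨B, hB, hBP⟩ := exists_topSum_eq P (l + 2)
  obtain ⟨A, hA, hAP⟩ := exists_topSum_eq P l
  rcases le_or_gt #B (l + 1) with hB' | hB'
  · have := topSum_mono P (Nat.le_succ l)
    linarith [hBP ▸ sum_le_topSum P B hB']
  obtain ⟨b, hbB, hbA⟩ : ∃ b ∈ B, b ∉ A := not_subset.1 fun h => by
    have := card_le_card h
    omega
  have h₁ := sum_le_topSum P (l := l + 1) (insert b A) (by rw [card_insert_of_notMem hbA]; omega)
  have h₂ := sum_le_topSum P (l := l + 1) (B.erase b) (by rw [card_erase_of_mem hbB]; omega)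
  rw [sum_insert hbA] at h₁
  rw [sum_erase_eq_sub hbB] at h₂
  linarith

lemma antitone_topSum_increment : Antitone fun k => topSum P (k + 1) - topSum P k :=
  antitone_nat_of_succ_le fun k => by linarith [topSum_add_two_add_topSum_le P k]

lemma topSum_eq_sum_val_lt_of_antitone {M : ℕ} (Q : Fin M → ℝ) (hQ : Antitone Q) (hQ0 : 0 ≤ Q)
    (l : ℕ) : topSum Q l = ∑ i with i.val < l, Q i := by
  set L : Finset (Fin M) := {i | i.val < l}
  refine le_antisymm ?_ (sum_le_topSum Q L (Fin.card_filter_val_lt.trans_le (min_le_right _ _)))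
  obtain ⟨S, hS, hSQ⟩ := exists_topSum_eq Q l
  rw [hSQ, ← sum_inter_add_sum_sdiff S L, ← sum_inter_add_sum_sdiff L S, inter_comm]
  refine add_le_add_right ?_ _
  rcases (S \ L).eq_empty_or_nonempty with hSL | ⟨i, hi⟩
  · rw [hSL, sum_empty]
    exact sum_nonneg fun j _ => hQ0 j
  have hli : l ≤ (i : ℕ) := by simpa [L] using (mem_sdiff.1 hi).2
  have hlM : l < M := hli.trans_lt i.isLt
  have hL : #L = l := Fin.card_filter_val_lt.trans (min_eq_right hlM.le)
  -- every element outside `L` is at most `Q l`, every element of `L` at least `Q l`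
  calc ∑ j ∈ S \ L, Q j ≤ #(S \ L) • Q ⟨l, hlM⟩ :=
        sum_le_card_nsmul _ _ _ fun j hj => hQ (by simpa [L, Fin.le_def] using (mem_sdiff.1 hj).2)
    _ ≤ #(L \ S) • Q ⟨l, hlM⟩ :=
        nsmul_le_nsmul_left (hQ0 _) (card_sdiff_le_card_sdiff_iff.2 (hS.trans hL.ge))
    _ ≤ ∑ j ∈ L \ S, Q j :=
        card_nsmul_le_sum _ _ _ fun j hj =>
          hQ (Fin.le_def.2 (mem_filter.1 (Finset.mem_sdiff.1 hj).1).2.le)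

end TopSum

lemma MajorizedBy.trans {α β γ : Type*} [Fintype α] [Fintype β] [Fintype γ]
    {P : α → ℝ} {Q : β → ℝ} {R : γ → ℝ} (h₁ : MajorizedBy P Q) (h₂ : MajorizedBy Q R) :
    MajorizedBy P R :=
  fun l => (h₁ l).trans (h₂ l)

lemma sum_val_lt_eq_sum_range {M l : ℕ} (g : ℕ → ℝ) (hl : l ≤ M) :
    ∑ i : Fin M with i.val < l, g i = ∑ k ∈ range l, g k := by
  refine (sum_map _ Fin.valEmbedding g).symm.trans (congrArg (∑ k ∈ ·, g k) ?_)
  ext k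
  simp only [Finset.mem_map, mem_filter, mem_univ, true_and, Fin.valEmbedding_apply, mem_range]
  exact ⟨by rintro ⟨i, hi, rfl⟩; exact hi, fun hk => ⟨⟨k, hk.trans_le hl⟩, hk, rfl⟩⟩

section CM

variable {α : Type*} [Fintype α] (P : α → ℝ) {M : ℕ}

noncomputable def levelCM (P : α → ℝ) (M : ℕ) : ℝ :=
  ((∑ x, P x) - topSum P (JPM P M)) / ((M : ℝ) - (JPM P M : ℝ))

lemma bddAbove_JPM_set : BddAbove ({0} ∪ {j : ℕ | 1 ≤ j ∧ j ≤ M - 1 ∧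
    ((∑ x, P x) - topSum P j) / ((M : ℝ) - (j : ℝ)) < sortedVal P j}) :=
  ⟨M - 1, by rintro j (rfl | ⟨-, hj, -⟩) <;> simp_all⟩

lemma JPM_le_sub_one : JPM P M ≤ M - 1 :=
  csSup_le ⟨0, Or.inl rfl⟩ fun _ hj => hj.elim (fun h => (Set.mem_singleton_iff.1 h).trans_le
    (Nat.zero_le _)) (·.2.1)

lemma JPM_lt (hM : 0 < M) : JPM P M < M :=
  (JPM_le_sub_one P).trans_lt (by omega)

lemma levelCM_lt_sortedVal_JPM (hJ : JPM P M ≠ 0) : levelCM P M < sortedVal P (JPM P M) := by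
  rcases Nat.sSup_mem ⟨0, Or.inl rfl⟩ (bddAbove_JPM_set P) with h | ⟨-, -, h⟩
  · exact absurd h hJ
  · exact h

lemma sub_mul_sortedVal_le_of_JPM_lt {j : ℕ} (hJj : JPM P M < j) (hjM : j < M) :
    ((M : ℝ) - j) * sortedVal P j ≤ (∑ x, P x) - topSum P j := by
  have hj : ¬ ((∑ x, P x) - topSum P j) / ((M : ℝ) - j) < sortedVal P j := fun h =>
    hJj.not_ge (le_csSup (bddAbove_JPM_set P) (Or.inr ⟨by omega, by omega, h⟩))
  have hMj : (0 : ℝ) < (M : ℝ) - j := sub_pos.2 (by exact_mod_cast hjM)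
  rw [not_lt, le_div_iff₀ hMj] at hj
  linarith

lemma sortedVal_JPM_succ_le_levelCM (h : JPM P M + 1 < M) :
    sortedVal P (JPM P M + 1) ≤ levelCM P M := by
  have hmax := sub_mul_sortedVal_le_of_JPM_lt P (Nat.lt_succ_self _) h
  rw [sortedVal_succ] at hmax ⊢
  rw [levelCM, le_div_iff₀ (sub_pos.2 (by exact_mod_cast (Nat.lt_succ_self _).trans h))]
  push_cast at hmax
  linarith

lemma sub_JPM_mul_levelCM (hM : 0 < M) :
    ((M : ℝ) - JPM P M) * levelCM P M = (∑ x, P x) - topSum P (JPM P M) :=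
  mul_div_cancel₀ _ (sub_ne_zero.2 (by exact_mod_cast (JPM_lt P hM).ne'))

lemma levelCM_nonneg (hP : 0 ≤ P) (hM : 0 < M) : 0 ≤ levelCM P M :=
  div_nonneg (sub_nonneg.2 (topSum_le_sum P hP _))
    (sub_nonneg.2 (by exact_mod_cast (JPM_lt P hM).le))

lemma CM_apply_of_lt (i : Fin M) (h : (i : ℕ) < JPM P M) :
    CM P M i = topSum P (i + 1) - topSum P i := by
  rw [CM, if_pos (show (i : ℕ) + 1 ≤ JPM P M from h), sortedVal_succ]

lemma CM_apply_of_le (i : Fin M) (h : JPM P M ≤ i) : CM P M i = levelCM P M := by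
  rw [CM, if_neg (by omega), levelCM]

lemma CM_nonneg (hP : 0 ≤ P) (hM : 0 < M) : 0 ≤ CM P M := fun i => by
  rcases lt_or_ge (i : ℕ) (JPM P M) with h | h
  · rw [CM_apply_of_lt P i h]
    exact sub_nonneg.2 (topSum_mono P (Nat.le_succ _))
  · rw [CM_apply_of_le P i h]
    exact levelCM_nonneg P hP hM

lemma antitone_CM : Antitone (CM P M) := by
  intro i j (hij : (i : ℕ) ≤ j)
  rcases lt_or_ge (j : ℕ) (JPM P M) with hj | hj
  · rw [CM_apply_of_lt P j hj, CM_apply_of_lt P i (hij.trans_lt hj)]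
    exact antitone_topSum_increment P hij
  rw [CM_apply_of_le P j hj]
  rcases lt_or_ge (i : ℕ) (JPM P M) with hi | hi
  · obtain ⟨k, hk⟩ := Nat.exists_eq_succ_of_ne_zero (n := JPM P M) (by omega)
    have hlt := levelCM_lt_sortedVal_JPM P (M := M) (by omega)
    rw [hk, sortedVal_succ] at hlt
    rw [CM_apply_of_lt P i hi]
    exact hlt.le.trans (antitone_topSum_increment P (by omega : (i : ℕ) ≤ k))
  · rw [CM_apply_of_le P i hi]

lemma sum_CM_val_lt {l : ℕ} (hl : l ≤ M) : ∑ i : Fin M with i.val < l, CM P M i =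
    ∑ k ∈ range l, if k + 1 ≤ JPM P M then sortedVal P (k + 1) else levelCM P M :=
  sum_val_lt_eq_sum_range
    (fun k => if k + 1 ≤ JPM P M then sortedVal P (k + 1) else levelCM P M) hl

lemma sum_CM_val_lt_of_le_JPM {l : ℕ} (hl : l ≤ JPM P M) :
    ∑ i : Fin M with i.val < l, CM P M i = topSum P l := by
  rw [sum_CM_val_lt P (hl.trans ((JPM_le_sub_one P).trans (Nat.sub_le M 1))),
    sum_congr rfl fun k hk => if_pos (show k + 1 ≤ JPM P M from (mem_range.1 hk).trans_le hl)]
  simp_rw [sortedVal_succ]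
  rw [sum_range_sub (topSum P), topSum_zero, sub_zero]

lemma sum_CM_val_lt_of_JPM_le {l : ℕ} (hJl : JPM P M ≤ l) (hlM : l ≤ M) :
    ∑ i : Fin M with i.val < l, CM P M i =
      topSum P (JPM P M) + ((l : ℝ) - JPM P M) * levelCM P M := by
  obtain ⟨d, rfl⟩ := Nat.exists_eq_add_of_le hJl
  rw [sum_CM_val_lt P hlM, sum_range_add, ← sum_CM_val_lt P (Nat.le_of_add_right_le hlM),
    sum_CM_val_lt_of_le_JPM P le_rfl, sum_congr rfl fun k _ => if_neg (by omega), sum_const,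
    card_range, nsmul_eq_mul]
  push_cast
  ring

lemma topSum_CM_of_le_JPM (hP : 0 ≤ P) (hM : 0 < M) {l : ℕ} (hl : l ≤ JPM P M) :
    topSum (CM P M) l = topSum P l := by
  rw [topSum_eq_sum_val_lt_of_antitone _ (antitone_CM P) (CM_nonneg P hP hM),
    sum_CM_val_lt_of_le_JPM P hl]

lemma topSum_CM_of_JPM_le (hP : 0 ≤ P) (hM : 0 < M) {l : ℕ} (hJl : JPM P M ≤ l)
    (hlM : l ≤ M) :
    topSum (CM P M) l = topSum P (JPM P M) + ((l : ℝ) - JPM P M) * levelCM P M := by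
  rw [topSum_eq_sum_val_lt_of_antitone _ (antitone_CM P) (CM_nonneg P hP hM),
    sum_CM_val_lt_of_JPM_le P hJl hlM]

lemma topSum_CM_of_le (hP : 0 ≤ P) (hM : 0 < M) {l : ℕ} (hMl : M ≤ l) :
    topSum (CM P M) l = ∑ x, P x := by
  have hCM := CM_nonneg P hP hM
  rw [topSum_eq_sum _ hCM (by simpa using hMl), ← topSum_eq_sum _ hCM (l := M) (by simp),
    topSum_CM_of_JPM_le P hP hM (JPM_lt P hM).le le_rfl, sub_JPM_mul_levelCM P hM]
  ring

lemma isProbDist_CM (hP : IsProbDist P) (hM : 0 < M) : IsProbDist (CM P M) := by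
  have hCM := CM_nonneg P hP.1 hM
  refine ⟨hCM, ?_⟩
  rw [← topSum_eq_sum _ hCM (l := M) (by simp), topSum_CM_of_le P hP.1 hM le_rfl, hP.2]

lemma majorizedBy_CM (hP : 0 ≤ P) (hM : 0 < M) : MajorizedBy P (CM P M) := by
  intro l
  rcases le_or_gt l (JPM P M) with hlJ | hJl
  · rw [topSum_CM_of_le_JPM P hP hM hlJ]
  rcases le_or_gt M l with hMl | hlM
  · rw [topSum_CM_of_le P hP hM hMl]
    exact topSum_le_sum P hP l
  rw [topSum_CM_of_JPM_le P hP hM hJl.le hlM.le]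
  have hinc := sub_le_mul_increment (antitone_topSum_increment P) hJl.le
  have hlevel := sortedVal_JPM_succ_le_levelCM P (M := M) (by omega)
  rw [sortedVal_succ] at hlevel
  have hlJ : (0 : ℝ) ≤ (l : ℝ) - JPM P M := sub_nonneg.2 (by exact_mod_cast hJl.le)
  linarith [mul_le_mul_of_nonneg_left hlevel hlJ]

lemma CM_majorizedBy (hP : 0 ≤ P) (hM : 0 < M) {P' : Fin M → ℝ} (hP' : 0 ≤ P')
    (hsum : ∑ i, P' i = ∑ x, P x) (h : MajorizedBy P P') : MajorizedBy (CM P M) P' := by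
  have hT'M : topSum P' M = ∑ x, P x := by rw [topSum_eq_sum P' hP' (by simp), hsum]
  intro l
  rcases le_or_gt l (JPM P M) with hlJ | hJl
  · rw [topSum_CM_of_le_JPM P hP hM hlJ]
    exact h l
  rcases le_or_gt M l with hMl | hlM
  · rw [topSum_CM_of_le P hP hM hMl, ← hT'M]
    exact topSum_mono P' hMl
  rw [topSum_CM_of_JPM_le P hP hM hJl.le hlM.le]
  have hconc := interpolate_le_of_antitone_increment (antitone_topSum_increment P') hJl.le hlM.le
  have hJ := h (JPM P M)
  have hlevel := congrArg (((l : ℝ) - JPM P M) * ·) (sub_JPM_mul_levelCM P hM)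
  have hMJ : (0 : ℝ) < (M : ℝ) - JPM P M := sub_pos.2 (by exact_mod_cast hJl.trans hlM)
  have hMl : (0 : ℝ) ≤ (M : ℝ) - l := sub_nonneg.2 (by exact_mod_cast hlM.le)
  refine le_of_mul_le_mul_left ?_ hMJ
  rw [hT'M] at hconc
  linarith [mul_le_mul_of_nonneg_left hJ hMl]

end CM

theorem FMstore_eq_FM_CM_general {α β : Type*} [Fintype α] [Fintype β]
    (P : α → ℝ) (Q : β → ℝ) (hP : IsProbDist P) (N : ℕ) :
    FMstore P Q (2 ^ N) = FM (CM P (2 ^ N)) Q := by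
  have hM : 0 < 2 ^ N := by positivity
  unfold FMstore FM
  congr 1
  ext r
  constructor
  · rintro ⟨P', P'', hP', hP'', hPP', hP'P'', rfl⟩
    have hCP' := CM_majorizedBy P hP.1 hM hP'.1 (hP'.2.trans hP.2.symm) hPP'
    exact ⟨P'', hP'', hCP'.trans hP'P'', rfl⟩
  · rintro ⟨P'', hP'', hCP'', rfl⟩
    exact ⟨CM P _, P'', isProbDist_CM P hP hM, hP'', majorizedBy_CM P hP.1 hM, hCP'', rfl⟩

/-- Lemma (opt trans): the maximal fidelity of majorization conversion from `P`
to `Q` via a storage of `N` bits equals the maximal fidelity of unrestricted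
majorization conversion from `𝒞_{2^N}(P)` to `Q`. -/
theorem FMstore_eq_FM_CM {α β : Type*} [Fintype α] [Fintype β]
    (P : α → ℝ) (Q : β → ℝ) (hP : IsProbDist P) (hQ : IsProbDist Q) (N : ℕ) :
    FMstore P Q (2 ^ N) = FM (CM P (2 ^ N)) Q :=
  FMstore_eq_FM_CM_general P Q hP N
end

section
/- Let s₁, t₁ > 0 and s₂, t₂, s'₂, t'₂ ∈ ℝ. Then there exists a sequence {a_n} ⊂ (0,1] satisfying s₁(1 − a_n)√n = s₂√(a_n) − s'₂ + o(1) and t₁(1 − a_n)√n = t₂√(a_n) − t'₂ + o(1) as n → ∞ (i.e., the second-order rate pair (s₂, t₂) at first-order rates (s₁, t₁) simulates (s'₂, t'₂)) if and only if s₂ ≥ s'₂ and t'₂ = t₂ + (t₁/s₁)(s'₂ − s₂). -/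
open Filter Topology

/-
Write `b n = (1 - a n) √n ≥ 0` for the deficit. Since `√(a n) ∈ [0, 1]`, the first
condition bounds `b`, so `1 - a n = b n / √n → 0` and `√(a n) → 1`. Both conditions then say exactly that
`s₁ b n → s₂ - s'₂` and `t₁ b n → t₂ - t'₂`, i.e. `b n → c := (s₂ - s'₂)/s₁ ≥ 0` and
`t₁ c = t₂ - t'₂`. Conversely, for such `c` the sequence `a n = 1 - min (c/√n) (1/2)` has
`b n = c` for large `n`.
-/

lemma tendsto_sqrt_natCast_atTop : Tendsto (fun n : ℕ => √(n : ℝ)) atTop atTop :=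
  Real.tendsto_sqrt_atTop.comp tendsto_natCast_atTop_atTop

lemma tendsto_zero_of_nonneg_of_mul_le {α : Type*} {l : Filter α} {x f : α → ℝ} {C : ℝ}
    (hf : Tendsto f l atTop) (hx : ∀ᶠ n in l, 0 ≤ x n) (hC : ∀ᶠ n in l, x n * f n ≤ C) :
    Tendsto x l (𝓝 0) := by
  refine tendsto_of_tendsto_of_tendsto_of_le_of_le' tendsto_const_nhds
    ((tendsto_const_nhds (x := C)).div_atTop hf) hx ?_
  filter_upwards [hC, hf.eventually_gt_atTop 0] with n hn hfn
  rwa [le_div_iff₀ hfn]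

lemma tendsto_sub_affine_zero_iff {α : Type*} {l : Filter α} {x y : α → ℝ}
    (hy : Tendsto y l (𝓝 1)) (r r' : ℝ) :
    Tendsto (fun n => x n - (r * y n - r')) l (𝓝 0) ↔ Tendsto x l (𝓝 (r - r')) := by
  have hg : Tendsto (fun n => r * y n - r') l (𝓝 (r - r')) := by
    simpa using (hy.const_mul r).sub_const r'
  constructor
  · intro h
    simpa using h.add hg
  · intro h
    simpa using h.sub hg

lemma tendsto_one_of_deficit_sub_tendsto_zero {a : ℕ → ℝ} {s₁ s₂ s₂' : ℝ} (hs₁ : 0 < s₁)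
    (ha : ∀ n, a n ≤ 1)
    (h : Tendsto (fun n : ℕ => s₁ * (1 - a n) * √(n : ℝ) - (s₂ * √(a n) - s₂')) atTop (𝓝 0)) :
    Tendsto a atTop (𝓝 1) := by
  have hbound : ∀ᶠ n in atTop, (1 - a n) * √(n : ℝ) ≤ (1 + |s₂| + |s₂'|) / s₁ := by
    filter_upwards [h.eventually (gt_mem_nhds one_pos)] with n hn
    have hsqrt : √(a n) ≤ 1 := Real.sqrt_le_one.mpr (ha n)
    have hs₂ : s₂ * √(a n) ≤ |s₂| := by
      nlinarith [le_abs_self s₂, abs_nonneg s₂, Real.sqrt_nonneg (a n)]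
    rw [le_div_iff₀ hs₁]
    nlinarith [neg_abs_le s₂']
  have hdeficit : Tendsto (fun n => 1 - a n) atTop (𝓝 0) :=
    tendsto_zero_of_nonneg_of_mul_le tendsto_sqrt_natCast_atTop
      (Eventually.of_forall fun n => sub_nonneg.mpr (ha n)) hbound
  simpa using hdeficit.const_sub 1

lemma exists_tendsto_one_deficit_eq {c : ℝ} (hc : 0 ≤ c) :
    ∃ a : ℕ → ℝ, (∀ n, a n ∈ Set.Ioc (0 : ℝ) 1) ∧ Tendsto a atTop (𝓝 1) ∧
      ∀ᶠ n in atTop, (1 - a n) * √(n : ℝ) = c := by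
  refine ⟨fun n => 1 - min (c / √(n : ℝ)) (1 / 2), fun n => ⟨?_, ?_⟩, ?_, ?_⟩
  · linarith [min_le_right (c / √(n : ℝ)) (1 / 2)]
  · have : 0 ≤ c / √(n : ℝ) := by positivity
    simp only [sub_le_self_iff, le_min_iff]
    constructor <;> linarith
  · have h := ((tendsto_const_nhds (x := c)).div_atTop tendsto_sqrt_natCast_atTop).min
      (tendsto_const_nhds (x := (1 / 2 : ℝ)))
    simpa using h.const_sub 1
  · filter_upwards [tendsto_sqrt_natCast_atTop.eventually_ge_atTop (2 * c + 1)] with n hn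
    have hpos : 0 < √(n : ℝ) := by linarith
    have hsmall : c / √(n : ℝ) ≤ 1 / 2 := by
      rw [div_le_iff₀ hpos]
      linarith
    rw [min_eq_left hsmall, sub_sub_cancel, div_mul_cancel₀ c hpos.ne']

theorem second_order_simulates_iff_general (s₁ t₁ : ℝ) (hs₁ : 0 < s₁)
    (s₂ t₂ s₂' t₂' : ℝ) :
    (∃ a : ℕ → ℝ, (∀ n, a n ∈ Set.Ioc (0 : ℝ) 1) ∧
      Tendsto (fun n : ℕ =>
        s₁ * (1 - a n) * Real.sqrt n - (s₂ * Real.sqrt (a n) - s₂')) atTop (𝓝 0) ∧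
      Tendsto (fun n : ℕ =>
        t₁ * (1 - a n) * Real.sqrt n - (t₂ * Real.sqrt (a n) - t₂')) atTop (𝓝 0)) ↔
    (s₂' ≤ s₂ ∧ t₂' = t₂ + (t₁ / s₁) * (s₂' - s₂)) := by
  constructor
  · rintro ⟨a, ha, hs, ht⟩
    have hsqrt : Tendsto (fun n => √(a n)) atTop (𝓝 1) := by
      simpa using (tendsto_one_of_deficit_sub_tendsto_zero hs₁ (fun n => (ha n).2) hs).sqrt
    rw [tendsto_sub_affine_zero_iff hsqrt] at hs ht
    have hnonneg : 0 ≤ s₂ - s₂' := ge_of_tendsto' hs fun n =>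
      mul_nonneg (mul_nonneg hs₁.le (sub_nonneg.mpr (ha n).2)) (Real.sqrt_nonneg _)
    have ht' : Tendsto (fun n : ℕ => t₁ * (1 - a n) * √(n : ℝ)) atTop
        (𝓝 (t₁ / s₁ * (s₂ - s₂'))) :=
      (hs.const_mul (t₁ / s₁)).congr fun n => by field_simp
    have hlim := tendsto_nhds_unique ht ht'
    constructor <;> linarith
  · rintro ⟨hle, heq⟩
    obtain ⟨a, ha, ha1, hdeficit⟩ :=
      exists_tendsto_one_deficit_eq (div_nonneg (sub_nonneg.mpr hle) hs₁.le)
    have hsqrt : Tendsto (fun n => √(a n)) atTop (𝓝 1) := by simpa using ha1.sqrt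
    have hb (r : ℝ) : Tendsto (fun n : ℕ => r * (1 - a n) * √(n : ℝ)) atTop
        (𝓝 (r * ((s₂ - s₂') / s₁))) :=
      tendsto_const_nhds.congr' <| by filter_upwards [hdeficit] with n hn; rw [mul_assoc, hn]
    refine ⟨a, ha, ?_, ?_⟩ <;> rw [tendsto_sub_affine_zero_iff hsqrt]
    · convert hb s₁ using 2
      field_simp
    · convert hb t₁ using 2
      rw [heq]
      field_simp
      ring

/-- Lemma (simulate, second order): given first-order rates `s₁, t₁ > 0`, the
second-order rate pair `(s₂, t₂)` simulates `(s'₂, t'₂)`, i.e. there exists a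
sequence `{a_n} ⊂ (0,1]` with `s₁(1 − a_n)√n = s₂√(a_n) − s'₂ + o(1)` and
`t₁(1 − a_n)√n = t₂√(a_n) − t'₂ + o(1)`, if and only if `s₂ ≥ s'₂` and
`t'₂ = t₂ + (t₁/s₁)(s'₂ − s₂)`. -/
theorem second_order_simulates_iff (s₁ t₁ : ℝ) (hs₁ : 0 < s₁) (ht₁ : 0 < t₁)
    (s₂ t₂ s₂' t₂' : ℝ) :
    (∃ a : ℕ → ℝ, (∀ n, a n ∈ Set.Ioc (0 : ℝ) 1) ∧
      Tendsto (fun n : ℕ =>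
        s₁ * (1 - a n) * Real.sqrt n - (s₂ * Real.sqrt (a n) - s₂')) atTop (𝓝 0) ∧
      Tendsto (fun n : ℕ =>
        t₁ * (1 - a n) * Real.sqrt n - (t₂ * Real.sqrt (a n) - t₂')) atTop (𝓝 0)) ↔
    (s₂' ≤ s₂ ∧ t₂' = t₂ + (t₁ / s₁) * (s₂' - s₂)) :=
  second_order_simulates_iff_general s₁ t₁ hs₁ s₂ t₂ s₂' t₂'
end
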